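/- arXiv:2602.01903 — 2 statements merged into one kernel-verified Lean document; each statement's English description precedes it below -/
import Mathlib

section
/- Let A be a finite nonempty set with A = |A| elements and let T ≥ 1 be an integer. For t = 1,…,T+1 let η_t : A → (0, ∞) satisfy η_{t+1}(a) ≤ η_t(a) for all t ≤ T and a ∈ A, with η_1(a) = η₁ constant in a; for t = 1,…,T let ℓ_t : A → ℝ and x_t ∈ ℝ; for t = 1,…,T+1 let m_t : A → ℝ. For t = 1,…,T+1 let p_t be a probability vector on A with p_t(a) > 0 for all a, which minimizes p ↦ Σ_{a∈A} p(a)·(Σ_{τ=1}^{t−1} ℓ_τ(a) + m_t(a)) + Σ_{a∈A} (1/η_t(a))·ln(1/p(a)) over the probability simplex on A. Assume that η_t(a)·p_t(a)·(ℓ_t(a) − m_t(a) + x_t) ≥ −1/2 for all t ≤ T and all a ∈ A. Then for every probability vector u on A: Σ_{t=1}^{T} Σ_{a∈A} (p_t(a) − u(a))·ℓ_t(a) ≤ A·ln(A·T²)/η₁ + Σ_{t=1}^{T} Σ_{a∈A} (1/η_{t+1}(a) − 1/η_t(a))·ln(A·T²) + Σ_{t=1}^{T} Σ_{a∈A} η_t(a)·p_t(a)²·(ℓ_t(a)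 − m_t(a) + x_t)² + (1/T²)·Σ_{t=1}^{T} Σ_{a∈A} (−u(a) + 1/A)·ℓ_t(a) + 2·max_{a∈A} |m_{T+1}(a)|. -/
/-!
Each round, first-order optimality of `p t` gives a three-point inequality involving the Bregman
divergence of the log-barrier, and since the learning rates decrease the regularizer may be
replaced by the next one. What remains of round `t` is a linear gain minus a Bregman divergence,
which is at most `η p² (ℓ - m + x)²` by `log (1 + z) ≥ z - z²` for `z ≥ -1/2`; the shift `x t` is
free because `p t` and `p (t + 1)` both sum to one. After telescoping, the regularizer is evaluated
at the comparator, which is pushed into the interior by mixing `u` with the uniform distribution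
with weight `1 / T²`, so that `log (1 / v a) ≤ log (A T²)`.
-/

open Finset Real

section

variable {A : Type*} [Fintype A]

theorem sub_sq_le_log_one_add {z : ℝ} (hz : -(1 / 2) ≤ z) : z - z ^ 2 ≤ log (1 + z) := by
  have h1z : 0 < 1 + z := by linarith
  rcases le_total 0 z with hz0 | hz0
  · have hinv : 1 - (1 + z)⁻¹ ≤ log (1 + z) := one_sub_inv_le_log_of_pos h1z
    have : z - z ^ 2 ≤ 1 - (1 + z)⁻¹ := by
      rw [show 1 - (1 + z)⁻¹ = z / (1 + z) by field_simp; ring, le_div_iff₀ h1z]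
      nlinarith [pow_nonneg hz0 3]
    linarith
  · -- `log (1 + t) - t + t ^ 2` has derivative `t (1 + 2 t) / (1 + t) ≤ 0` on `[-1/2, 0]`
    let f : ℝ → ℝ := fun t ↦ log (1 + t) - t + t ^ 2
    have hderiv : ∀ t, -1 < t → HasDerivAt f ((1 + t)⁻¹ - 1 + 2 * t) t := fun t ht ↦
      ((((hasDerivAt_id t).const_add 1).log (by simp; linarith)).sub (hasDerivAt_id t)).add
        (hasDerivAt_pow 2 t) |>.congr_deriv (by simp)
    have hanti : AntitoneOn f (Set.Icc (-(1 / 2)) 0) := by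
      refine antitoneOn_of_hasDerivWithinAt_nonpos (convex_Icc _ _) ?_
        (fun t ht ↦ (hderiv t ?_).hasDerivWithinAt) fun t ht ↦ ?_
      · exact fun t ht ↦ (hderiv t (by linarith [ht.1])).continuousAt.continuousWithinAt
      · rw [interior_Icc] at ht; linarith [ht.1]
      · rw [interior_Icc] at ht
        obtain ⟨ht₁, ht₂⟩ := ht
        have h1t : 0 < 1 + t := by linarith
        rw [show (1 + t)⁻¹ - 1 + 2 * t = t * (1 + 2 * t) / (1 + t) by field_simp; ring]
        exact div_nonpos_of_nonpos_of_nonneg (by nlinarith) h1t.le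
    have := hanti ⟨hz, hz0⟩ ⟨by norm_num, le_rfl⟩ hz0
    simp only [f, add_zero, log_one] at this
    linarith

theorem logBarrier_stability {p q e g : ℝ} (hp : 0 < p) (hq : 0 < q) (he : 0 < e)
    (hz : -(1 / 2) ≤ e * p * g) :
    (p - q) * g - (1 / e) * (log (p / q) + q / p - 1) ≤ e * p ^ 2 * g ^ 2 := by
  set z := e * p * g with hz_def
  have h1z : 0 < 1 + z := by linarith
  set y := q * (1 + z) / p with hy_def
  have hy : 0 < y := by positivity
  -- `p / (1 + z)` is where `q ↦ (p - q) * g - (1 / e) * (log (p / q) + q / p - 1)` is maximal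
  have hsplit : (p - q) * g - (1 / e) * (log (p / q) + q / p - 1) =
      (1 / e) * ((z - log (1 + z)) + (log y - (y - 1))) := by
    rw [log_div hp.ne' hq.ne', hy_def, log_div (by positivity) hp.ne', log_mul hq.ne' h1z.ne',
      hz_def]
    field_simp
    ring
  calc (p - q) * g - (1 / e) * (log (p / q) + q / p - 1)
      ≤ (1 / e) * z ^ 2 := by
        rw [hsplit]
        exact mul_le_mul_of_nonneg_left
          (by linarith [sub_sq_le_log_one_add hz, log_le_sub_one_of_pos hy]) (by positivity)
    _ = e * p ^ 2 * g ^ 2 := by rw [hz_def]; field_simp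

noncomputable def logBarrier (c q : A → ℝ) : ℝ := ∑ a, c a * log (1 / q a)

/-- The Bregman divergence `D(x, y)` of `logBarrier c`. -/
noncomputable def logBarrierBregman (c x y : A → ℝ) : ℝ :=
  ∑ a, c a * (log (y a / x a) + x a / y a - 1)

theorem logBarrier_mono {c c' q : A → ℝ} (hq : ∀ a, 0 < q a) (hqs : ∑ a, q a = 1)
    (hcc' : ∀ a, c a ≤ c' a) : logBarrier c q ≤ logBarrier c' q := by
  refine sum_le_sum fun a _ ↦ mul_le_mul_of_nonneg_right (hcc' a) (log_nonneg ?_)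
  rw [le_one_div one_pos (hq a), one_div_one]
  exact hqs ▸ single_le_sum (fun b _ ↦ (hq b).le) (mem_univ a)

theorem logBarrier_nonneg {c q : A → ℝ} (hc : ∀ a, 0 ≤ c a) (hq : ∀ a, 0 < q a)
    (hqs : ∑ a, q a = 1) : 0 ≤ logBarrier c q := by
  simpa [logBarrier] using logBarrier_mono (c := 0) hq hqs hc

theorem logBarrier_first_order {w c p q : A → ℝ} (hp : ∀ a, 0 < p a)
    (hq : ∀ a, 0 < q a) (hps : ∑ a, p a = 1) (hqs : ∑ a, q a = 1)
    (hmin : ∀ r : A → ℝ, (∀ a, 0 < r a) → ∑ a, r a = 1 →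
      ∑ a, p a * w a + logBarrier c p ≤ ∑ a, r a * w a + logBarrier c r) :
    ∑ a, c a * ((q a - p a) / p a) ≤ ∑ a, (q a - p a) * w a := by
  let r : ℝ → A → ℝ := fun s a ↦ p a + s * (q a - p a)
  let g : ℝ → ℝ := fun s ↦ ∑ a, r s a * w a + logBarrier c (r s)
  have hr_pos : ∀ s ∈ Set.Icc (0 : ℝ) 1, ∀ a, 0 < r s a := fun s hs a ↦ by
    have : r s a = (1 - s) * p a + s * q a := by ring
    rcases hs.2.eq_or_lt with rfl | hs1
    · simpa [this] using hq a
    · rw [this]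
      exact add_pos_of_pos_of_nonneg (mul_pos (by linarith) (hp a)) (mul_nonneg hs.1 (hq a).le)
  have hr_sum : ∀ s, ∑ a, r s a = 1 := fun s ↦ by
    simp only [r, sum_add_distrib, ← mul_sum, sum_sub_distrib, hps, hqs, sub_self, mul_zero,
      add_zero]
  have hg_min : IsMinOn g (Set.Icc 0 1) 0 := fun s hs ↦ by
    simpa [g, r] using hmin (r s) (hr_pos s hs) (hr_sum s)
  have hr_deriv : ∀ a, HasDerivAt (fun s ↦ r s a) (q a - p a) 0 := fun a ↦ by
    simpa only [id, one_mul] using ((hasDerivAt_id (0 : ℝ)).mul_const (q a - p a)).const_add (p a)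
  have hg_deriv : HasDerivAt g
      (∑ a, (q a - p a) * w a + ∑ a, c a * -((q a - p a) / p a)) 0 := by
    refine (HasDerivAt.fun_sum fun a _ ↦ (hr_deriv a).mul_const (w a)).add
      (HasDerivAt.fun_sum fun a _ ↦ ?_)
    have := ((hr_deriv a).log (by simpa [r] using (hp a).ne')).neg.const_mul (c a)
    simpa [r, one_div, log_inv] using this
  have hseg : segment ℝ (0 : ℝ) (0 + 1) ⊆ Set.Icc 0 1 := by
    simp [segment_eq_Icc]
  have := hg_min.localize.hasFDerivWithinAt_nonneg hg_deriv.hasDerivWithinAt.hasFDerivWithinAt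
    (mem_posTangentConeAt_of_segment_subset hseg)
  simp only [ContinuousLinearMap.toSpanSingleton_apply, one_smul, mul_neg, sum_neg_distrib] at this
  linarith

theorem add_logBarrier_add_bregman_le {w c p q : A → ℝ} (hp : ∀ a, 0 < p a)
    (hq : ∀ a, 0 < q a) (hps : ∑ a, p a = 1) (hqs : ∑ a, q a = 1)
    (hmin : ∀ r : A → ℝ, (∀ a, 0 < r a) → ∑ a, r a = 1 →
      ∑ a, p a * w a + logBarrier c p ≤ ∑ a, r a * w a + logBarrier c r) :
    ∑ a, p a * w a + logBarrier c p + logBarrierBregman c q p ≤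
      ∑ a, q a * w a + logBarrier c q := by
  have hfirst := logBarrier_first_order hp hq hps hqs hmin
  have hterm : ∀ a, c a * log (1 / q a) = c a * log (1 / p a) +
      c a * (log (p a / q a) + q a / p a - 1) - c a * ((q a - p a) / p a) := fun a ↦ by
    rw [log_div (hp a).ne' (hq a).ne', one_div, one_div, log_inv, log_inv]
    field_simp [(hp a).ne']
    ring
  have hbarrier : logBarrier c q = logBarrier c p + logBarrierBregman c q p -
      ∑ a, c a * ((q a - p a) / p a) := by
    simp only [logBarrier, logBarrierBregman, hterm, sum_sub_distrib, sum_add_distrib]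
  simp only [sub_mul, sum_sub_distrib] at hfirst
  linarith

theorem abs_sum_mul_le_of_abs_le {v m : A → ℝ} {M : ℝ} (hv : ∀ a, 0 ≤ v a) (hvs : ∑ a, v a = 1)
    (hM : ∀ a, |m a| ≤ M) : |∑ a, v a * m a| ≤ M :=
  calc |∑ a, v a * m a| ≤ ∑ a, v a * |m a| := by
        simpa only [abs_mul, abs_of_nonneg (hv _)] using abs_sum_le_sum_abs (fun a ↦ v a * m a) univ
    _ ≤ ∑ a, v a * M := sum_le_sum fun a _ ↦ mul_le_mul_of_nonneg_left (hM a) (hv a)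
    _ = M := by rw [← sum_mul, hvs, one_mul]

theorem ftrl_round_le {L ℓ m η η' P P' : A → ℝ} {x : ℝ} (hη : ∀ a, 0 < η a)
    (hη' : ∀ a, 0 < η' a) (hηη' : ∀ a, η' a ≤ η a) (hP : ∀ a, 0 < P a) (hPs : ∑ a, P a = 1)
    (hP' : ∀ a, 0 < P' a) (hP's : ∑ a, P' a = 1)
    (hmin : ∀ q : A → ℝ, (∀ a, 0 < q a) → ∑ a, q a = 1 →
      ∑ a, P a * (L a + m a) + logBarrier (fun a ↦ 1 / η a) P ≤
        ∑ a, q a * (L a + m a) + logBarrier (fun a ↦ 1 / η a) q)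
    (hcond : ∀ a, η a * P a * (ℓ a - m a + x) ≥ -(1 / 2)) :
    ∑ a, P a * L a + logBarrier (fun a ↦ 1 / η a) P + ∑ a, P a * ℓ a -
        (∑ a, P' a * (L a + ℓ a) + logBarrier (fun a ↦ 1 / η' a) P') ≤
      ∑ a, η a * P a ^ 2 * (ℓ a - m a + x) ^ 2 := by
  have hopt := add_logBarrier_add_bregman_le hP hP' hPs hP's hmin
  have hmono : logBarrier (fun a ↦ 1 / η a) P' ≤ logBarrier (fun a ↦ 1 / η' a) P' :=
    logBarrier_mono hP' hP's fun a ↦ one_div_le_one_div_of_le (hη' a) (hηη' a)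
  have hstab : ∑ a, (P a - P' a) * (ℓ a - m a + x) - logBarrierBregman (fun a ↦ 1 / η a) P' P ≤
      ∑ a, η a * P a ^ 2 * (ℓ a - m a + x) ^ 2 := by
    rw [logBarrierBregman, ← sum_sub_distrib]
    exact sum_le_sum fun a _ ↦ logBarrier_stability (hP a) (hP' a) (hη a) (hcond a)
  simp only [mul_add, mul_sub, sub_mul, sum_add_distrib, sum_sub_distrib, ← sum_mul, hPs,
    hP's] at hopt hstab ⊢
  linarith

theorem ftrl_le_comparator_add_two_mul {L m c P v : A → ℝ} {M : ℝ} (hP : ∀ a, 0 < P a)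
    (hPs : ∑ a, P a = 1) (hv : ∀ a, 0 < v a) (hvs : ∑ a, v a = 1)
    (hmin : ∀ q : A → ℝ, (∀ a, 0 < q a) → ∑ a, q a = 1 →
      ∑ a, P a * (L a + m a) + logBarrier c P ≤ ∑ a, q a * (L a + m a) + logBarrier c q)
    (hM : ∀ a, |m a| ≤ M) :
    ∑ a, P a * L a + logBarrier c P ≤ ∑ a, v a * L a + logBarrier c v + 2 * M := by
  have h := hmin v hv hvs
  have hPm := abs_le.mp (abs_sum_mul_le_of_abs_le (fun a ↦ (hP a).le) hPs hM)
  have hvm := abs_le.mp (abs_sum_mul_le_of_abs_le (fun a ↦ (hv a).le) hvs hM)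
  simp only [mul_add, sum_add_distrib] at h
  linarith [hPm.1, hvm.2]

noncomputable def mixUniform (ε : ℝ) (u : A → ℝ) (a : A) : ℝ :=
  (1 - ε) * u a + ε / Fintype.card A

theorem sum_mixUniform [Nonempty A] (ε : ℝ) {u : A → ℝ} (hus : ∑ a, u a = 1) :
    ∑ a, mixUniform ε u a = 1 := by
  have hcard : (Fintype.card A : ℝ) ≠ 0 := by positivity
  simp only [mixUniform, sum_add_distrib, ← mul_sum, hus, sum_const, card_univ, nsmul_eq_mul]
  field_simp
  ring

theorem div_card_le_mixUniform {ε : ℝ} (hε : ε ≤ 1) {u : A → ℝ} (hu : ∀ a, 0 ≤ u a) (a : A) :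
    ε / Fintype.card A ≤ mixUniform ε u a :=
  le_add_of_nonneg_left (mul_nonneg (sub_nonneg.mpr hε) (hu a))

theorem mixUniform_pos [Nonempty A] {ε : ℝ} (hε₀ : 0 < ε) (hε₁ : ε ≤ 1) {u : A → ℝ}
    (hu : ∀ a, 0 ≤ u a) (a : A) : 0 < mixUniform ε u a :=
  (by positivity : 0 < ε / Fintype.card A).trans_le (div_card_le_mixUniform hε₁ hu a)

theorem logBarrier_mixUniform_le [Nonempty A] {c u : A → ℝ} {ε : ℝ} (hc : ∀ a, 0 ≤ c a)
    (hu : ∀ a, 0 ≤ u a) (hε₀ : 0 < ε) (hε₁ : ε ≤ 1) :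
    logBarrier c (mixUniform ε u) ≤ ∑ a, c a * log (Fintype.card A / ε) := by
  have hpos := mixUniform_pos hε₀ hε₁ hu
  refine sum_le_sum fun a _ ↦ mul_le_mul_of_nonneg_left (log_le_log (by simp [hpos a]) ?_) (hc a)
  rw [one_div_le (hpos a) (by positivity), one_div_div]
  exact div_card_le_mixUniform hε₁ hu a

end

theorem oftrl_regret_le_logBarrier {A : Type*} [Fintype A] (T : ℕ) (hT : 1 ≤ T)
    (η : ℕ → A → ℝ) (hηpos : ∀ t ∈ Icc 1 (T + 1), ∀ a, 0 < η t a)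
    (hηdec : ∀ t ∈ Icc 1 T, ∀ a, η (t + 1) a ≤ η t a)
    (ℓ : ℕ → A → ℝ) (x : ℕ → ℝ) (m : ℕ → A → ℝ) (p : ℕ → A → ℝ)
    (hppos : ∀ t ∈ Icc 1 (T + 1), ∀ a, 0 < p t a)
    (hpsum : ∀ t ∈ Icc 1 (T + 1), ∑ a, p t a = 1)
    (hmin : ∀ t ∈ Icc 1 (T + 1), ∀ q : A → ℝ, (∀ a, 0 < q a) → ∑ a, q a = 1 →
      ∑ a, p t a * ((∑ τ ∈ Icc 1 (t - 1), ℓ τ a) + m t a) + logBarrier (fun a ↦ 1 / η t a) (p t) ≤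
        ∑ a, q a * ((∑ τ ∈ Icc 1 (t - 1), ℓ τ a) + m t a) + logBarrier (fun a ↦ 1 / η t a) q)
    (hcond : ∀ t ∈ Icc 1 T, ∀ a, η t a * p t a * (ℓ t a - m t a + x t) ≥ -(1 / 2))
    (v : A → ℝ) (hv : ∀ a, 0 < v a) (hvs : ∑ a, v a = 1) (M : ℝ) (hM : ∀ a, |m (T + 1) a| ≤ M) :
    ∑ t ∈ Icc 1 T, ∑ a, (p t a - v a) * ℓ t a ≤
      logBarrier (fun a ↦ 1 / η (T + 1) a) v
        + ∑ t ∈ Icc 1 T, ∑ a, η t a * p t a ^ 2 * (ℓ t a - m t a + x t) ^ 2 + 2 * M := by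
  have hlow : ∀ t ∈ Icc 1 T, t ∈ Icc 1 (T + 1) := fun t ht ↦ by simp at ht ⊢; omega
  have hhigh : ∀ t ∈ Icc 1 T, t + 1 ∈ Icc 1 (T + 1) := fun t ht ↦ by simp at ht ⊢; omega
  have hlast : T + 1 ∈ Icc 1 (T + 1) := by simp
  let L : ℕ → A → ℝ := fun n a ↦ ∑ τ ∈ Icc 1 n, ℓ τ a
  -- the value of the FTRL objective at `p t`, without the optimistic term `m t`
  let S : ℕ → ℝ := fun t ↦ ∑ a, p t a * L (t - 1) a + logBarrier (fun a ↦ 1 / η t a) (p t)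
  have hround : ∀ t ∈ Icc 1 T, S t + ∑ a, p t a * ℓ t a - S (t + 1) ≤
      ∑ a, η t a * p t a ^ 2 * (ℓ t a - m t a + x t) ^ 2 := fun t ht ↦ by
    have hL : ∀ a, L t a = L (t - 1) a + ℓ t a := fun a ↦ by
      obtain ⟨n, rfl⟩ : ∃ n, t = n + 1 := ⟨t - 1, by simp at ht; omega⟩
      exact sum_Icc_succ_top (by omega) _
    simp only [S, Nat.add_sub_cancel, hL]
    exact ftrl_round_le (hηpos t (hlow t ht)) (hηpos (t + 1) (hhigh t ht)) (hηdec t ht)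
      (hppos t (hlow t ht)) (hpsum t (hlow t ht)) (hppos (t + 1) (hhigh t ht))
      (hpsum (t + 1) (hhigh t ht)) (hmin t (hlow t ht)) (hcond t ht)
  have hS₁ : 0 ≤ S 1 := by
    simpa [S, L] using logBarrier_nonneg (fun a ↦ (one_div_pos.mpr (hηpos 1 (by simp) a)).le)
      (hppos 1 (by simp)) (hpsum 1 (by simp))
  have hS_last : S (T + 1) ≤ ∑ a, v a * L T a + logBarrier (fun a ↦ 1 / η (T + 1) a) v + 2 * M :=
    ftrl_le_comparator_add_two_mul (hppos _ hlast) (hpsum _ hlast) hv hvs (hmin _ hlast) hM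
  have htelescope : ∑ t ∈ Icc 1 T, (S t + ∑ a, p t a * ℓ t a - S (t + 1)) =
      ∑ t ∈ Icc 1 T, ∑ a, p t a * ℓ t a - (S (T + 1) - S 1) := by
    rw [← sum_Icc_sub hT, ← sum_sub_distrib]
    exact sum_congr rfl fun t _ ↦ by ring
  have hregret : ∑ t ∈ Icc 1 T, ∑ a, (p t a - v a) * ℓ t a =
      ∑ t ∈ Icc 1 T, ∑ a, p t a * ℓ t a - ∑ a, v a * L T a := by
    simp only [L, sub_mul, sum_sub_distrib, mul_sum]
    rw [sum_comm (s := univ) (t := Icc 1 T)]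
  linarith [sum_le_sum hround]

/-- Regret bound for optimistic FTRL with the log-barrier regularizer
`p ↦ ∑ a, (1/η t a) · ln(1/p a)` over the probability simplex on a finite set `A`
(policy optimization at a fixed state). -/
theorem oftrl_log_barrier_policy
    {A : Type*} [Fintype A] [Nonempty A]
    (T : ℕ) (hT : 1 ≤ T)
    (η : ℕ → A → ℝ)
    (hηpos : ∀ t ∈ Finset.Icc 1 (T + 1), ∀ a, 0 < η t a)
    (hηdec : ∀ t ∈ Finset.Icc 1 T, ∀ a, η (t + 1) a ≤ η t a)
    (η₁ : ℝ) (hη1 : ∀ a, η 1 a = η₁)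
    (ℓ : ℕ → A → ℝ) (x : ℕ → ℝ) (m : ℕ → A → ℝ)
    (p : ℕ → A → ℝ)
    (hppos : ∀ t ∈ Finset.Icc 1 (T + 1), ∀ a, 0 < p t a)
    (hpsum : ∀ t ∈ Finset.Icc 1 (T + 1), ∑ a, p t a = 1)
    (hmin : ∀ t ∈ Finset.Icc 1 (T + 1), ∀ q : A → ℝ, (∀ a, 0 < q a) → ∑ a, q a = 1 →
      (∑ a, p t a * ((∑ τ ∈ Finset.Icc 1 (t - 1), ℓ τ a) + m t a))
          + ∑ a, (1 / η t a) * Real.log (1 / p t a) ≤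
        (∑ a, q a * ((∑ τ ∈ Finset.Icc 1 (t - 1), ℓ τ a) + m t a))
          + ∑ a, (1 / η t a) * Real.log (1 / q a))
    (hcond : ∀ t ∈ Finset.Icc 1 T, ∀ a,
      η t a * p t a * (ℓ t a - m t a + x t) ≥ -(1 / 2))
    (u : A → ℝ) (hunonneg : ∀ a, 0 ≤ u a) (husum : ∑ a, u a = 1) :
    ∑ t ∈ Finset.Icc 1 T, ∑ a, (p t a - u a) * ℓ t a ≤
      (Fintype.card A : ℝ) * Real.log ((Fintype.card A : ℝ) * T ^ 2) / η₁
      + ∑ t ∈ Finset.Icc 1 T, ∑ a,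
          (1 / η (t + 1) a - 1 / η t a) * Real.log ((Fintype.card A : ℝ) * T ^ 2)
      + ∑ t ∈ Finset.Icc 1 T, ∑ a, η t a * (p t a) ^ 2 * (ℓ t a - m t a + x t) ^ 2
      + (1 / (T : ℝ) ^ 2) * ∑ t ∈ Finset.Icc 1 T, ∑ a,
          (-u a + 1 / (Fintype.card A : ℝ)) * ℓ t a
      + 2 * (⨆ a, |m (T + 1) a|) := by
  have hT2 : (1 : ℝ) ≤ (T : ℝ) ^ 2 := one_le_pow₀ (by exact_mod_cast hT)
  set ε : ℝ := 1 / (T : ℝ) ^ 2 with hε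
  have hε₀ : 0 < ε := by positivity
  have hε₁ : ε ≤ 1 := div_le_one_of_le₀ hT2 (by positivity)
  set C := Real.log ((Fintype.card A : ℝ) * T ^ 2)
  set v := mixUniform ε u
  have hM : ∀ a, |m (T + 1) a| ≤ ⨆ a, |m (T + 1) a| := fun a ↦
    le_ciSup (f := fun a ↦ |m (T + 1) a|) (Set.finite_range _).bddAbove a
  have hregret := oftrl_regret_le_logBarrier T hT η hηpos hηdec ℓ x m p hppos hpsum hmin hcond v
    (mixUniform_pos hε₀ hε₁ hunonneg) (sum_mixUniform ε husum) _ hM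
  have hbarrier : logBarrier (fun a ↦ 1 / η (T + 1) a) v ≤ ∑ a, 1 / η (T + 1) a * C := by
    convert logBarrier_mixUniform_le (fun a ↦ (one_div_pos.mpr (hηpos (T + 1) (by simp) a)).le)
      hunonneg hε₀ hε₁ using 4
    rw [hε, div_div_eq_mul_div, div_one]
  have hrates : ∑ a, 1 / η (T + 1) a * C = Fintype.card A * C / η₁ +
      ∑ t ∈ Icc 1 T, ∑ a, (1 / η (t + 1) a - 1 / η t a) * C := by
    have := sum_Icc_sub hT fun t ↦ ∑ a, 1 / η t a * C
    simp only [← sum_sub_distrib, ← sub_mul, hη1, sum_const, card_univ, nsmul_eq_mul] at this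
    rw [this]
    ring
  have hshift : ∑ t ∈ Icc 1 T, ∑ a, (p t a - u a) * ℓ t a =
      ∑ t ∈ Icc 1 T, ∑ a, (p t a - v a) * ℓ t a +
        ε * ∑ t ∈ Icc 1 T, ∑ a, (-u a + 1 / Fintype.card A) * ℓ t a := by
    simp only [mul_sum, ← sum_add_distrib]
    exact sum_congr rfl fun t _ ↦ sum_congr rfl fun a _ ↦ by simp only [v, mixUniform]; ring
  linarith
end

section
/- Let ι be a finite type and T ≥ 1 an integer. For t = 1,…,T let I_t : ι → {0,1} and ℓ_t, ℓ'_t : ι → [0,1]. Let N_t(i) = Σ_{τ=1}^{t} I_τ(i), and define the empirical-mean predictors m_t(i) = (Σ_{τ=1}^{t−1} I_τ(i)·ℓ_τ(i)) / max(1, N_{t−1}(i)) and m'_t(i) = (Σ_{τ=1}^{t−1} I_τ(i)·ℓ'_τ(i)) / max(1, N_{t−1}(i)). Then: Σ_{t=1}^{T} Σ_{i∈ι} I_t(i)·(m'_t(i) − m_t(i))² ≤ (2 + ln T)·Σ_{t=1}^{T} Σ_{i∈ι} I_t(i)·|ℓ'_t(i) − ℓ_t(i)|. -/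
/-!
Fix a coordinate and let `S` be its total corruption. At a visit preceded by `n` earlier
visits, the two empirical means differ by at most `S / max 1 n`, and since both lie in
`[0, 1]` their squared gap is at most their gap. Summing over the visits therefore gives at
most `S · ∑_{n < T} 1 / max 1 n = S · (1 + H_{T-1}) ≤ S · (2 + log T)`.
-/

open Finset

noncomputable def clampedHarmonic (n : ℕ) : ℝ := ∑ k ∈ range n, (max 1 (k : ℝ))⁻¹

lemma clampedHarmonic_succ (n : ℕ) : clampedHarmonic (n + 1) = 1 + harmonic n := by
  rw [clampedHarmonic, sum_range_succ', harmonic, add_comm]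
  push_cast
  congr 1
  · simp
  · exact sum_congr rfl fun k _ => by rw [max_eq_right (by linarith [k.cast_nonneg (α := ℝ)])]

lemma clampedHarmonic_mono : Monotone clampedHarmonic := fun _ _ hmn =>
  sum_le_sum_of_subset_of_nonneg (range_subset_range.mpr hmn) fun _ _ _ => by positivity

lemma clampedHarmonic_le_two_add_log (n : ℕ) : clampedHarmonic n ≤ 2 + Real.log n := by
  rcases n with _ | n
  · simp [clampedHarmonic]
  · have hmono : (harmonic n : ℝ) ≤ harmonic (n + 1) := by
      rw [harmonic_succ]; push_cast; linarith [inv_pos.mpr (n.cast_add_one_pos (α := ℝ))]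
    rw [clampedHarmonic_succ]
    linarith [harmonic_le_one_add_log (n + 1)]

section PrefixSums

variable {a : ℕ → ℝ} {T : ℕ}

lemma sum_div_max_one_prefix_le_clampedHarmonic (ha : ∀ t ∈ Icc 1 T, a t = 0 ∨ a t = 1) :
    ∑ t ∈ Icc 1 T, a t / max 1 (∑ τ ∈ Icc 1 (t - 1), a τ) ≤
      clampedHarmonic ⌊∑ τ ∈ Icc 1 T, a τ⌋₊ := by
  -- The prefix sums are natural numbers; `⌊·⌋₊` lets the induction avoid tracking this.
  induction T with
  | zero => simp [clampedHarmonic]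
  | succ T ih =>
    have ha' : ∀ t ∈ Icc 1 T, a t = 0 ∨ a t = 1 := fun t ht =>
      ha t (Icc_subset_Icc_right T.le_succ ht)
    have hp : 0 ≤ ∑ τ ∈ Icc 1 T, a τ :=
      sum_nonneg fun t ht => by rcases ha' t ht with h | h <;> simp [h]
    rw [sum_Icc_succ_top (by omega), sum_Icc_succ_top (by omega), Nat.add_sub_cancel]
    rcases ha (T + 1) (by simp) with h | h
    · simpa [h] using ih ha'
    · rw [h, Nat.floor_add_one hp, clampedHarmonic, sum_range_succ, ← clampedHarmonic, one_div]
      gcongr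
      · exact ih ha'
      · exact Nat.floor_le hp

lemma sum_div_max_one_prefix_le_two_add_log (ha : ∀ t ∈ Icc 1 T, a t = 0 ∨ a t = 1) :
    ∑ t ∈ Icc 1 T, a t / max 1 (∑ τ ∈ Icc 1 (t - 1), a τ) ≤ 2 + Real.log T := by
  have hpT : ∑ τ ∈ Icc 1 T, a τ ≤ T := by
    calc ∑ τ ∈ Icc 1 T, a τ ≤ ∑ _τ ∈ Icc 1 T, (1 : ℝ) :=
          sum_le_sum fun t ht => by rcases ha t ht with h | h <;> simp [h]
      _ = (T : ℝ) := by simp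
  calc _ ≤ clampedHarmonic ⌊∑ τ ∈ Icc 1 T, a τ⌋₊ := sum_div_max_one_prefix_le_clampedHarmonic ha
    _ ≤ clampedHarmonic T := clampedHarmonic_mono (Nat.floor_le_of_le hpT)
    _ ≤ 2 + Real.log T := clampedHarmonic_le_two_add_log T

end PrefixSums

section EmpiricalMean

variable {α : Type*} {s : Finset α} {w x y : α → ℝ}

noncomputable def empiricalMean (s : Finset α) (w x : α → ℝ) : ℝ :=
  (∑ j ∈ s, w j * x j) / max 1 (∑ j ∈ s, w j)

lemma empiricalMean_mem_Icc (hw : ∀ j ∈ s, 0 ≤ w j) (hx : ∀ j ∈ s, x j ∈ Set.Icc (0 : ℝ) 1) :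
    empiricalMean s w x ∈ Set.Icc (0 : ℝ) 1 := by
  have hD : 0 < max 1 (∑ j ∈ s, w j) := lt_max_of_lt_left one_pos
  constructor
  · exact div_nonneg (sum_nonneg fun j hj => mul_nonneg (hw j hj) (hx j hj).1) hD.le
  · rw [empiricalMean, div_le_one hD]
    calc ∑ j ∈ s, w j * x j ≤ ∑ j ∈ s, w j :=
          sum_le_sum fun j hj => mul_le_of_le_one_right (hw j hj) (hx j hj).2
      _ ≤ max 1 (∑ j ∈ s, w j) := le_max_right _ _

lemma abs_empiricalMean_sub_le (hw : ∀ j ∈ s, 0 ≤ w j) :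
    |empiricalMean s w x - empiricalMean s w y| ≤
      (∑ j ∈ s, w j * |x j - y j|) / max 1 (∑ j ∈ s, w j) := by
  have hD : 0 < max 1 (∑ j ∈ s, w j) := lt_max_of_lt_left one_pos
  rw [empiricalMean, empiricalMean, ← sub_div, abs_div, abs_of_pos hD, ← sum_sub_distrib]
  gcongr
  calc |∑ j ∈ s, (w j * x j - w j * y j)| ≤ ∑ j ∈ s, |w j * x j - w j * y j| :=
        abs_sum_le_sum_abs _ _
    _ = ∑ j ∈ s, w j * |x j - y j| :=
        sum_congr rfl fun j hj => by rw [← mul_sub, abs_mul, abs_of_nonneg (hw j hj)]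

end EmpiricalMean

lemma sq_sub_le_abs_sub_of_mem_Icc {a b : ℝ} (ha : a ∈ Set.Icc (0 : ℝ) 1)
    (hb : b ∈ Set.Icc (0 : ℝ) 1) : (a - b) ^ 2 ≤ |a - b| := by
  have h1 : |a - b| ≤ 1 := abs_sub_le_iff.mpr ⟨by linarith [ha.2, hb.1], by linarith [ha.1, hb.2]⟩
  rw [← sq_abs, sq]
  exact mul_le_of_le_one_left (abs_nonneg _) h1

lemma sum_mul_sq_empiricalMean_sub_le {T : ℕ} {a x y : ℕ → ℝ}
    (ha : ∀ t ∈ Icc 1 T, a t = 0 ∨ a t = 1) (hx : ∀ t ∈ Icc 1 T, x t ∈ Set.Icc (0 : ℝ) 1)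
    (hy : ∀ t ∈ Icc 1 T, y t ∈ Set.Icc (0 : ℝ) 1) :
    ∑ t ∈ Icc 1 T,
        a t * (empiricalMean (Icc 1 (t - 1)) a y - empiricalMean (Icc 1 (t - 1)) a x) ^ 2 ≤
      (2 + Real.log T) * ∑ t ∈ Icc 1 T, a t * |y t - x t| := by
  have ha0 : ∀ t ∈ Icc 1 T, 0 ≤ a t := fun t ht => by rcases ha t ht with h | h <;> simp [h]
  set S := ∑ t ∈ Icc 1 T, a t * |y t - x t|
  have hS : 0 ≤ S := sum_nonneg fun t ht => mul_nonneg (ha0 t ht) (abs_nonneg _)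
  have hterm : ∀ t ∈ Icc 1 T,
      a t * (empiricalMean (Icc 1 (t - 1)) a y - empiricalMean (Icc 1 (t - 1)) a x) ^ 2 ≤
        S * (a t / max 1 (∑ τ ∈ Icc 1 (t - 1), a τ)) := by
    intro t ht
    have hpast : Icc 1 (t - 1) ⊆ Icc 1 T := Icc_subset_Icc_right (by grind)
    rcases ha t ht with h | h
    · simp [h]
    · rw [h, one_mul, mul_one_div]
      have hw : ∀ τ ∈ Icc 1 (t - 1), 0 ≤ a τ := fun τ hτ => ha0 τ (hpast hτ)
      calc _ ≤ |empiricalMean (Icc 1 (t - 1)) a y - empiricalMean (Icc 1 (t - 1)) a x| :=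
            sq_sub_le_abs_sub_of_mem_Icc (empiricalMean_mem_Icc hw fun τ hτ => hy τ (hpast hτ))
              (empiricalMean_mem_Icc hw fun τ hτ => hx τ (hpast hτ))
        _ ≤ _ := abs_empiricalMean_sub_le hw
        _ ≤ S / max 1 (∑ τ ∈ Icc 1 (t - 1), a τ) := by
            gcongr
            exact sum_le_sum_of_subset_of_nonneg hpast fun τ hτ _ =>
              mul_nonneg (ha0 τ hτ) (abs_nonneg _)
  calc _ ≤ ∑ t ∈ Icc 1 T, S * (a t / max 1 (∑ τ ∈ Icc 1 (t - 1), a τ)) := sum_le_sum hterm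
    _ = S * ∑ t ∈ Icc 1 T, a t / max 1 (∑ τ ∈ Icc 1 (t - 1), a τ) := (mul_sum _ _ _).symm
    _ ≤ S * (2 + Real.log T) := by gcongr; exact sum_div_max_one_prefix_le_two_add_log ha
    _ = (2 + Real.log T) * S := mul_comm _ _

theorem empirical_mean_corruption_general
    {ι : Type*} [Fintype ι] (T : ℕ)
    (ℓ ℓ' : ℕ → ι → ℝ) (I : ℕ → ι → ℝ)
    (hℓ : ∀ t ∈ Finset.Icc 1 T, ∀ i, ℓ t i ∈ Set.Icc (0 : ℝ) 1)
    (hℓ' : ∀ t ∈ Finset.Icc 1 T, ∀ i, ℓ' t i ∈ Set.Icc (0 : ℝ) 1)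
    (hI : ∀ t ∈ Finset.Icc 1 T, ∀ i, I t i = 0 ∨ I t i = 1)
    (N : ℕ → ι → ℝ) (hN : ∀ t, ∀ i, N t i = ∑ τ ∈ Finset.Icc 1 t, I τ i)
    (m m' : ℕ → ι → ℝ)
    (hm : ∀ t ∈ Finset.Icc 1 T, ∀ i,
      m t i = (∑ τ ∈ Finset.Icc 1 (t - 1), I τ i * ℓ τ i) / max 1 (N (t - 1) i))
    (hm' : ∀ t ∈ Finset.Icc 1 T, ∀ i,
      m' t i = (∑ τ ∈ Finset.Icc 1 (t - 1), I τ i * ℓ' τ i) / max 1 (N (t - 1) i)) :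
    ∑ t ∈ Finset.Icc 1 T, ∑ i, I t i * (m' t i - m t i) ^ 2 ≤
      (2 + Real.log T) * ∑ t ∈ Finset.Icc 1 T, ∑ i, I t i * |ℓ' t i - ℓ t i| := by
  calc ∑ t ∈ Icc 1 T, ∑ i, I t i * (m' t i - m t i) ^ 2
      = ∑ i, ∑ t ∈ Icc 1 T, I t i * (empiricalMean (Icc 1 (t - 1)) (I · i) (ℓ' · i) -
          empiricalMean (Icc 1 (t - 1)) (I · i) (ℓ · i)) ^ 2 := by
        rw [sum_comm]
        refine sum_congr rfl fun i _ => sum_congr rfl fun t ht => ?_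
        rw [hm t ht i, hm' t ht i, hN]
        rfl
    _ ≤ ∑ i, (2 + Real.log T) * ∑ t ∈ Icc 1 T, I t i * |ℓ' t i - ℓ t i| :=
        sum_le_sum fun i _ => sum_mul_sq_empiricalMean_sub_le (fun t ht => hI t ht i)
          (fun t ht => hℓ t ht i) (fun t ht => hℓ' t ht i)
    _ = (2 + Real.log T) * ∑ t ∈ Icc 1 T, ∑ i, I t i * |ℓ' t i - ℓ t i| := by
        rw [← mul_sum, sum_comm]

/-- Corruption bound for empirical-mean predictors: with visitation indicators
`I t i ∈ {0,1}`, visit counts `N t i = ∑_{τ=1}^{t} I τ i`, and empirical means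
`m`/`m'` of the losses `ℓ`/`ℓ'` along visited coordinates, the cumulative squared gap
between the two predictors on visited coordinates is bounded by `(2 + ln T)` times
the total corruption `∑_t ∑_i I t i · |ℓ' t i - ℓ t i|`. -/
theorem empirical_mean_corruption
    {ι : Type*} [Fintype ι] (T : ℕ) (hT : 1 ≤ T)
    (ℓ ℓ' : ℕ → ι → ℝ) (I : ℕ → ι → ℝ)
    (hℓ : ∀ t ∈ Finset.Icc 1 T, ∀ i, ℓ t i ∈ Set.Icc (0 : ℝ) 1)
    (hℓ' : ∀ t ∈ Finset.Icc 1 T, ∀ i, ℓ' t i ∈ Set.Icc (0 : ℝ) 1)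
    (hI : ∀ t ∈ Finset.Icc 1 T, ∀ i, I t i = 0 ∨ I t i = 1)
    (N : ℕ → ι → ℝ) (hN : ∀ t, ∀ i, N t i = ∑ τ ∈ Finset.Icc 1 t, I τ i)
    (m m' : ℕ → ι → ℝ)
    (hm : ∀ t ∈ Finset.Icc 1 T, ∀ i,
      m t i = (∑ τ ∈ Finset.Icc 1 (t - 1), I τ i * ℓ τ i) / max 1 (N (t - 1) i))
    (hm' : ∀ t ∈ Finset.Icc 1 T, ∀ i,
      m' t i = (∑ τ ∈ Finset.Icc 1 (t - 1), I τ i * ℓ' τ i) / max 1 (N (t - 1) i)) :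
    ∑ t ∈ Finset.Icc 1 T, ∑ i, I t i * (m' t i - m t i) ^ 2 ≤
      (2 + Real.log T) * ∑ t ∈ Finset.Icc 1 T, ∑ i, I t i * |ℓ' t i - ℓ t i| :=
  empirical_mean_corruption_general T ℓ ℓ' I hℓ hℓ' hI N hN m m' hm hm'
end
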